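/- arXiv:2008.07983 — 5 statements merged into one kernel-verified Lean document; each statement's English description precedes it below -/
import Mathlib

section
/- Let m ≥ 2 be an integer, let f(p) = 2·(H₂(p) + (1-p)·log₂(m-1))/(p+3) for p ∈ [0,1], and let p* be the unique root in (0,1) of (1-x)^4 = (m-1)^4 x^3. Then the maximum of f over [0,1] is attained at p = p*, and max_{p∈[0,1]} f(p) = (1/2)·log₂(1/p*). -/
/-- The binary entropy function in bits, with the convention `0 · log₂ 0 = 0`. -/
noncomputable def binEnt (x : ℝ) : ℝ :=
  -x * Real.logb 2 x - (1 - x) * Real.logb 2 (1 - x)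

lemma gibbs_nat (p q : ℝ) (hp : 0 < p) (hp1 : p < 1) (hq : 0 ≤ q) (hq1 : q ≤ 1) :
    -q * Real.log q - (1 - q) * Real.log (1 - q)
      ≤ -q * Real.log p - (1 - q) * Real.log (1 - p) := by
  have t1 : q * (Real.log p - Real.log q) ≤ p - q := by
    rcases eq_or_lt_of_le hq with h0 | h0
    · simp [← h0]; linarith
    · have h := Real.log_le_sub_one_of_pos (div_pos hp h0)
      rw [Real.log_div hp.ne' h0.ne'] at h
      have h2 := mul_le_mul_of_nonneg_left h h0.le
      have e : q * (p / q) = p := by field_simp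
      nlinarith [h2]
  have t2 : (1 - q) * (Real.log (1 - p) - Real.log (1 - q)) ≤ (1 - p) - (1 - q) := by
    rcases eq_or_lt_of_le hq1 with h0 | h0
    · simp [h0]; linarith
    · have h1q : 0 < 1 - q := by linarith
      have h1p : 0 < 1 - p := by linarith
      have h := Real.log_le_sub_one_of_pos (div_pos h1p h1q)
      rw [Real.log_div h1p.ne' h1q.ne'] at h
      have h2 := mul_le_mul_of_nonneg_left h h1q.le
      have e : (1 - q) * ((1 - p) / (1 - q)) = 1 - p := by field_simp
      nlinarith [h2]
  nlinarith [t1, t2]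

lemma gibbs (p q : ℝ) (hp : 0 < p) (hp1 : p < 1) (hq : 0 ≤ q) (hq1 : q ≤ 1) :
    binEnt q ≤ -q * Real.logb 2 p - (1 - q) * Real.logb 2 (1 - p) := by
  have hlog2 : (0 : ℝ) < Real.log 2 := Real.log_pos one_lt_two
  have h := gibbs_nat p q hp hp1 hq hq1
  have h3 := mul_le_mul_of_nonneg_right h (inv_pos.mpr hlog2).le
  unfold binEnt
  have e : ∀ a : ℝ, Real.logb 2 a = Real.log a * (Real.log 2)⁻¹ := fun a => by
    rw [Real.logb, div_eq_mul_inv]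
  simp only [e]
  nlinarith [h3]

/-- Let `m ≥ 2` be an integer, `f(p) = 2(H₂(p) + (1-p)log₂(m-1))/(p+3)`
on `[0,1]`, and let `p*` be the unique root in `(0,1)` of `(1-x)^4 = (m-1)^4 x^3`.
Then the maximum of `f` over `[0,1]` is attained at `p*`, and it equals
`(1/2)·log₂(1/p*)`. -/
theorem capacity_max_at_root (m : ℤ) (hm : 2 ≤ m) (pstar : ℝ)
    (hps : pstar ∈ Set.Ioo (0 : ℝ) 1)
    (hroot : (1 - pstar) ^ 4 = ((m : ℝ) - 1) ^ 4 * pstar ^ 3)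
    (huniq : ∀ q ∈ Set.Ioo (0 : ℝ) 1,
      (1 - q) ^ 4 = ((m : ℝ) - 1) ^ 4 * q ^ 3 → q = pstar) :
    IsMaxOn (fun q : ℝ => 2 * (binEnt q + (1 - q) * Real.logb 2 ((m : ℝ) - 1)) / (q + 3))
      (Set.Icc 0 1) pstar ∧
    2 * (binEnt pstar + (1 - pstar) * Real.logb 2 ((m : ℝ) - 1)) / (pstar + 3)
      = 1 / 2 * Real.logb 2 (1 / pstar) := by
  obtain ⟨hp0, hp1⟩ := hps
  have hm' : (2 : ℝ) ≤ (m : ℝ) := by exact_mod_cast hm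
  have hm0 : (0 : ℝ) < (m : ℝ) - 1 := by linarith
  have h1p : (0 : ℝ) < 1 - pstar := by linarith
  -- log identity from the root equation
  have hid : Real.log (1 - pstar) = Real.log ((m : ℝ) - 1) + 3 / 4 * Real.log pstar := by
    have h4 : Real.log ((1 - pstar) ^ 4) = Real.log (((m : ℝ) - 1) ^ 4 * pstar ^ 3) := by
      rw [hroot]
    rw [Real.log_pow, Real.log_mul (by positivity) (by positivity), Real.log_pow,
      Real.log_pow] at h4
    push_cast at h4
    linarith
  have hidb : Real.logb 2 (1 - pstar)
      = Real.logb 2 ((m : ℝ) - 1) + 3 / 4 * Real.logb 2 pstar := by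
    simp only [Real.logb]
    rw [hid]; ring
  have hLm : Real.logb 2 ((m : ℝ) - 1)
      = Real.logb 2 (1 - pstar) - 3 / 4 * Real.logb 2 pstar := by linarith
  -- value at pstar
  have hval : 2 * (binEnt pstar + (1 - pstar) * Real.logb 2 ((m : ℝ) - 1)) / (pstar + 3)
      = -(1 / 2) * Real.logb 2 pstar := by
    have hnum : binEnt pstar + (1 - pstar) * Real.logb 2 ((m : ℝ) - 1)
        = -(Real.logb 2 pstar) * (pstar + 3) / 4 := by
      unfold binEnt
      rw [hLm]; ring
    rw [hnum]
    have h3 : pstar + 3 ≠ 0 := by linarith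
    field_simp
    ring
  constructor
  · rw [isMaxOn_iff]
    intro q hq
    obtain ⟨hq0, hq1⟩ := hq
    rw [hval]
    have hq3 : (0 : ℝ) < q + 3 := by linarith
    rw [div_le_iff₀ hq3]
    have G := gibbs pstar q hp0 hp1 hq0 hq1
    rw [hLm]
    nlinarith [G]
  · rw [hval, show (1:ℝ)/pstar = pstar⁻¹ from one_div _, Real.logb_inv]
    ring
end

section
/- Let m ≥ 2 be an integer, let p ∈ (0,1) satisfy (1-p)^4 = (m-1)^4 p^3, and let f(q) = 2·(H₂(q) + (1-q)·log₂(m-1))/(q+3). Then f is differentiable at p and its derivative at p equals 0 (i.e., p is a critical point of f). -/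
open Real

lemma binEnt_eq_binEntropy_div_log_two (x : ℝ) : binEnt x = binEntropy x / log 2 := by
  simp only [binEnt, binEntropy, logb, log_inv]
  ring

lemma hasDerivAt_binEnt {x : ℝ} (hx₀ : x ≠ 0) (hx₁ : x ≠ 1) :
    HasDerivAt binEnt (logb 2 (1 - x) - logb 2 x) x := by
  have h := (hasDerivAt_binEntropy hx₀ hx₁).div_const (log 2)
  rw [show binEnt = fun y => binEntropy y / log 2 from funext binEnt_eq_binEntropy_div_log_two]
  exact h.congr_deriv (sub_div _ _ _)

/-- In the quotient rule the `p log₂ p` and `(1-p) log₂(1-p)` terms of `binEnt p` cancel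
against those of `(p + 3) · binEnt' p`. -/
lemma hasDerivAt_capacity_ratio {c p : ℝ} (hp₀ : p ≠ 0) (hp₁ : p ≠ 1) (hp₃ : p + 3 ≠ 0) :
    HasDerivAt (fun q : ℝ => 2 * (binEnt q + (1 - q) * c) / (q + 3))
      (2 * (4 * logb 2 (1 - p) - 3 * logb 2 p - 4 * c) / (p + 3) ^ 2) p := by
  have hnum : HasDerivAt (fun q : ℝ => 2 * (binEnt q + (1 - q) * c))
      (2 * (logb 2 (1 - p) - logb 2 p + -1 * c)) p :=
    ((hasDerivAt_binEnt hp₀ hp₁).add (((hasDerivAt_id p).const_sub 1).mul_const c)).const_mul 2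
  have hden : HasDerivAt (fun q : ℝ => q + 3) 1 p := (hasDerivAt_id p).add_const 3
  refine (hnum.div hden hp₃).congr_deriv ?_
  unfold binEnt
  ring

lemma four_mul_logb_one_sub_of_pow_eq {b a p : ℝ} (hp₀ : p ≠ 0) (hp₁ : p ≠ 1)
    (hroot : (1 - p) ^ 4 = a ^ 4 * p ^ 3) :
    4 * logb b (1 - p) = 4 * logb b a + 3 * logb b p := by
  have ha : a ^ 4 ≠ 0 := by
    intro ha
    rw [ha, zero_mul] at hroot
    exact pow_ne_zero 4 (sub_ne_zero.2 hp₁.symm) hroot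
  have h := congrArg (logb b) hroot
  rw [logb_mul ha (pow_ne_zero 3 hp₀), logb_pow, logb_pow, logb_pow] at h
  exact_mod_cast h

theorem capacity_critical_point_general (m : ℤ) (p : ℝ)
    (hp : p ∈ Set.Ioo (0 : ℝ) 1)
    (hroot : (1 - p) ^ 4 = ((m : ℝ) - 1) ^ 4 * p ^ 3) :
    DifferentiableAt ℝ
      (fun q : ℝ => 2 * (binEnt q + (1 - q) * Real.logb 2 ((m : ℝ) - 1)) / (q + 3)) p ∧
    deriv
      (fun q : ℝ => 2 * (binEnt q + (1 - q) * Real.logb 2 ((m : ℝ) - 1)) / (q + 3)) p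
      = 0 := by
  obtain ⟨hp₀, hp₁⟩ := hp
  have hderiv := hasDerivAt_capacity_ratio (c := logb 2 ((m : ℝ) - 1))
    hp₀.ne' hp₁.ne (by linarith)
  refine ⟨hderiv.differentiableAt, ?_⟩
  rw [hderiv.deriv, four_mul_logb_one_sub_of_pow_eq hp₀.ne' hp₁.ne hroot]
  ring

/-- Let `m ≥ 2` be an integer, `p ∈ (0,1)` with `(1-p)^4 = (m-1)^4 p^3`,
and `f(q) = 2(H₂(q) + (1-q)log₂(m-1))/(q+3)`. Then `f` is differentiable at `p` and
its derivative at `p` equals `0`. -/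
theorem capacity_critical_point (m : ℤ) (hm : 2 ≤ m) (p : ℝ)
    (hp : p ∈ Set.Ioo (0 : ℝ) 1)
    (hroot : (1 - p) ^ 4 = ((m : ℝ) - 1) ^ 4 * p ^ 3) :
    DifferentiableAt ℝ
      (fun q : ℝ => 2 * (binEnt q + (1 - q) * Real.logb 2 ((m : ℝ) - 1)) / (q + 3)) p ∧
    deriv
      (fun q : ℝ => 2 * (binEnt q + (1 - q) * Real.logb 2 ((m : ℝ) - 1)) / (q + 3)) p
      = 0 :=
  capacity_critical_point_general m p hp hroot
end

section
/- For an integer m ≥ 2, let p_m denote the unique root in [0,1] of the quartic x^4 - ((m-1)^4 + 4)x^3 + 6x^2 - 4x + 1 (equivalently, of (1-x)^4 = (m-1)^4 x^3). Then p_m > 1/16 if and only if m ≤ 8; equivalently, the value ρ_m = (1/2)·log₂(1/p_m) satisfies ρ_m < 2 if and only if m ≤ 8. -/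
/-- For an integer `m ≥ 2`, let `p` denote the unique root in `[0,1]` of
the quartic `x^4 - ((m-1)^4 + 4)x^3 + 6x^2 - 4x + 1` (equivalently of
`(1-x)^4 = (m-1)^4 x^3`). Then `p > 1/16` iff `m ≤ 8`; equivalently,
`ρ = (1/2)log₂(1/p)` satisfies `ρ < 2` iff `m ≤ 8`. -/
theorem root_threshold_eight (m : ℤ) (hm : 2 ≤ m) (p : ℝ)
    (hp : p ∈ Set.Icc (0 : ℝ) 1)
    (hroot : p ^ 4 - (((m : ℝ) - 1) ^ 4 + 4) * p ^ 3 + 6 * p ^ 2 - 4 * p + 1 = 0) :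
    (1 / 16 < p ↔ m ≤ 8) ∧ (1 / 2 * Real.logb 2 (1 / p) < 2 ↔ m ≤ 8) := by
  obtain ⟨hp0, hp1⟩ := hp
  have hppos : 0 < p := by
    rcases hp0.lt_or_eq with h | h
    · exact h
    · exfalso; rw [← h] at hroot; norm_num at hroot
  have key : (1 - p) ^ 4 = ((m : ℝ) - 1) ^ 4 * p ^ 3 := by linear_combination hroot
  have h1 : 1 / 16 < p ↔ m ≤ 8 := by
    constructor
    · intro hpgt
      by_contra hmle
      push_neg at hmle
      have hm9 : (9 : ℝ) ≤ (m : ℝ) := by exact_mod_cast hmle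
      have hc : (4096 : ℝ) ≤ ((m : ℝ) - 1) ^ 4 := by
        have := pow_le_pow_left₀ (by norm_num : (0:ℝ) ≤ 8) (by linarith : (8:ℝ) ≤ (m:ℝ) - 1) 4
        norm_num at this ⊢; linarith
      have hp3 : (1 / 16 : ℝ) ^ 3 < p ^ 3 := by
        have := pow_lt_pow_left₀ hpgt (by norm_num : (0:ℝ) ≤ 1/16) (by norm_num : 3 ≠ 0)
        exact this
      have hmul : (4096 : ℝ) * p ^ 3 ≤ ((m : ℝ) - 1) ^ 4 * p ^ 3 :=
        mul_le_mul_of_nonneg_right hc (by positivity)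
      have h2 : (1 - p) ^ 4 ≤ 1 := by
        have := pow_le_one₀ (by linarith : (0:ℝ) ≤ 1 - p) (by linarith : 1 - p ≤ 1) (n := 4)
        exact this
      norm_num at hp3
      linarith [key ▸ h2]
    · intro hmle
      have hm8 : (m : ℝ) ≤ 8 := by exact_mod_cast hmle
      have hm2 : (2 : ℝ) ≤ (m : ℝ) := by exact_mod_cast hm
      by_contra hple
      push_neg at hple
      have hc : ((m : ℝ) - 1) ^ 4 ≤ 2401 := by
        have := pow_le_pow_left₀ (by linarith : (0:ℝ) ≤ (m:ℝ) - 1) (by linarith : (m:ℝ) - 1 ≤ 7) 4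
        norm_num at this; linarith
      have hp3 : p ^ 3 ≤ (1 / 16 : ℝ) ^ 3 := pow_le_pow_left₀ hp0 hple 3
      have hsmall : ((m : ℝ) - 1) ^ 4 * p ^ 3 ≤ 2401 * (1 / 16 : ℝ) ^ 3 :=
        mul_le_mul hc hp3 (by positivity) (by norm_num)
      have h15 : ((15 : ℝ) / 16) ^ 4 ≤ (1 - p) ^ 4 :=
        pow_le_pow_left₀ (by norm_num) (by linarith) 4
      norm_num at hsmall h15
      linarith [key]
  refine ⟨h1, ?_⟩
  rw [← h1, one_div p, Real.logb_inv]
  have h16 : (2 : ℝ) ^ (-(4 : ℝ)) = 1 / 16 := by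
    rw [Real.rpow_neg (by norm_num), show (4 : ℝ) = ((4 : ℕ) : ℝ) by norm_num,
      Real.rpow_natCast]
    norm_num
  constructor
  · intro h
    have h4 : -(4 : ℝ) < Real.logb 2 p := by linarith
    have := (Real.lt_logb_iff_rpow_lt (by norm_num) hppos).mp h4
    linarith [h16 ▸ this]
  · intro h
    have h2 : (2 : ℝ) ^ (-(4 : ℝ)) < p := by rw [h16]; linarith
    have := (Real.lt_logb_iff_rpow_lt (by norm_num) hppos).mpr h2
    linarith
end

section
/- Fix an integer m ≥ 2 and p ∈ (0,1). Let the node-marginal distribution on Q = Bool × Fin m be π((1,a)) = 2/(m(p+3)) and π((0,a)) = (1+p)/(m(p+3)) for each a ∈ Fin m, and let T(y|(1,a)) = (1+p)/2 if y = a and (1-p)/(2(m-1)) otherwise, T(y|(0,a)) = 2p/(1+p) if y = a and (1-p)/((1+p)(m-1)) otherwise. Then the conditional entropy H(Y|Q) := −Σ_{q∈Q} π(q)·Σ_{y∈Fin m} T(y|q)·log₂ T(y|q) equals (2/(p+3))·(H₂(p) + (1-p)·log₂(m-1)) + 2(1-p)/(p+3). -/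
/-- The test distribution `T(y|q)` of the Q-graph for `|X| ≤ 8`. -/
noncomputable def testT (p : ℝ) {m : ℕ} (y : Fin m) (q : Bool × Fin m) : ℝ :=
  if q.1 then (if y = q.2 then (1 + p) / 2 else (1 - p) / (2 * ((m : ℝ) - 1)))
  else (if y = q.2 then 2 * p / (1 + p) else (1 - p) / ((1 + p) * ((m : ℝ) - 1)))

/-- The node marginal distribution `π` on `Q = Bool × Fin m`:
`π(1,a) = 2/(m(p+3))` and `π(0,a) = (1+p)/(m(p+3))`. -/
noncomputable def nodeMarginal (p : ℝ) {m : ℕ} (q : Bool × Fin m) : ℝ :=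
  if q.1 then 2 / (m * (p + 3)) else (1 + p) / (m * (p + 3))

/-- Sum over `Fin m` of a function equal to `c` at `a` and `d` elsewhere. -/
lemma sum_ite_const' {m : ℕ} (a : Fin m) (c d : ℝ) :
    ∑ y : Fin m, (if y = a then c else d) = c + ((m:ℝ) - 1) * d := by
  have h : ∀ y : Fin m, (if y = a then c else d) = (if y = a then c - d else 0) + d := by
    intro y; split <;> ring
  simp only [h, Finset.sum_add_distrib, Finset.sum_ite_eq' Finset.univ a (fun _ => c - d),
    Finset.mem_univ, if_true, Finset.sum_const, Finset.card_univ, Fintype.card_fin,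
    nsmul_eq_mul]
  ring

/-- computation of `H(Y|Q)` in Lemma 2 of the paper: the conditional
entropy `H(Y|Q) = -Σ_q π(q) Σ_y T(y|q) log₂ T(y|q)` equals
`(2/(p+3))(H₂(p) + (1-p)log₂(m-1)) + 2(1-p)/(p+3)`. -/
theorem ising_entropy_Y_given_Q (m : ℕ) (hm : 2 ≤ m) (p : ℝ)
    (hp : p ∈ Set.Ioo (0 : ℝ) 1) :
    -(∑ q : Bool × Fin m,
        nodeMarginal p q * ∑ y : Fin m, testT p y q * Real.logb 2 (testT p y q))
      = 2 / (p + 3) * (binEnt p + (1 - p) * Real.logb 2 ((m : ℝ) - 1))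
        + 2 * (1 - p) / (p + 3) := by
  obtain ⟨hp0, hp1⟩ := hp
  have hm1 : (1:ℝ) < (m:ℝ) := by exact_mod_cast Nat.lt_of_lt_of_le one_lt_two hm
  have hm0 : ((m:ℝ) - 1) ≠ 0 := by linarith
  have h1p : (1 + p) ≠ 0 := by linarith
  have h1p' : (1 - p) ≠ 0 := by linarith
  have hpne : p ≠ 0 := ne_of_gt hp0
  have hp3 : p + 3 ≠ 0 := by linarith
  have hmne : (m:ℝ) ≠ 0 := by positivity
  have hinner : ∀ (b : Bool) (a : Fin m),
      (∑ y : Fin m, testT p y (b, a) * Real.logb 2 (testT p y (b, a)))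
      = if b then
          (1 + p) / 2 * Real.logb 2 ((1 + p) / 2)
            + ((m:ℝ) - 1) * ((1 - p) / (2 * ((m : ℝ) - 1))
                * Real.logb 2 ((1 - p) / (2 * ((m : ℝ) - 1))))
        else
          2 * p / (1 + p) * Real.logb 2 (2 * p / (1 + p))
            + ((m:ℝ) - 1) * ((1 - p) / ((1 + p) * ((m : ℝ) - 1))
                * Real.logb 2 ((1 - p) / ((1 + p) * ((m : ℝ) - 1)))) := by
    intro b a
    have key : ∀ (x : Fin m) (c d : ℝ),
        (if x = a then c else d) * Real.logb 2 (if x = a then c else d)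
          = if x = a then c * Real.logb 2 c else d * Real.logb 2 d := by
      intro x c d; split <;> rfl
    cases b <;>
      simp only [testT, if_true, if_false, Bool.false_eq_true, key, sum_ite_const']
  simp only [Fintype.sum_prod_type, hinner, nodeMarginal, Fintype.sum_bool, if_true,
    Bool.false_eq_true, if_false, Finset.sum_const, Finset.card_univ, Fintype.card_fin,
    nsmul_eq_mul]
  have l2 : Real.logb 2 2 = 1 := Real.logb_self_eq_one one_lt_two
  rw [Real.logb_div h1p two_ne_zero, Real.logb_div h1p' (by positivity),
    Real.logb_mul two_ne_zero hm0, Real.logb_div (by positivity) h1p,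
    Real.logb_mul two_ne_zero hpne, Real.logb_div h1p' (by positivity),
    Real.logb_mul h1p hm0, l2]
  unfold binEnt
  field_simp
  ring
end

section
/- Let A be a finite set with |A| = m ≥ 2, and let μ be a probability mass function on A × A × {0,1} × {0,1}, with coordinates written (y', y, w₀, w₁). Assume: (i) the marginal of μ on the last two coordinates is uniform, i.e., μ(w₀ = a, w₁ = b) = 1/4 for all a,b ∈ {0,1}; and (ii) μ(y ≠ y', w₀ = 1, w₁ = 0) = 0. Then the conditional entropy H(Y | Y', W₀, W₁) := −Σ_{(y',y,w₀,w₁)} μ(y',y,w₀,w₁)·log₂( μ(y',y,w₀,w₁) / μ₁(y',w₀,w₁) ) is at most (3/4)·log₂ m, where μ₁(y',w₀,w₁) = Σ_y μ(y',y,w₀,w₁) is the marginal on (y',w₀,w₁) and the convention 0·log₂(0/t) = 0 is used. -/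
/-!
Split the conditional entropy into the four blocks `(w₀, w₁)`, each of probability `1/4`.
In a block, the entropy of `Y` given `Y' = y'` is at most `log m` (Gibbs' inequality against
the uniform distribution), so a block contributes at most `(1/4) log m`. In the block
`(w₀, w₁) = (1, 0)` the output repeats, `Y` is determined by `Y'`, and the block contributes
nothing.
-/

open Finset Real

lemma mul_log_div_le_sub {p q : ℝ} (hp : 0 ≤ p) (hq : 0 < q) : p * log (q / p) ≤ q - p := by
  rcases hp.eq_or_lt with rfl | hp
  · simpa using hq.le
  · calc p * log (q / p) ≤ p * (q / p - 1) :=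
          mul_le_mul_of_nonneg_left (log_le_sub_one_of_pos (div_pos hq hp)) hp.le
      _ = q - p := by field_simp

section Entropy

variable {ι : Type*} [Fintype ι]

theorem sum_mul_log_sum_div_le (p : ι → ℝ) (hp : ∀ i, 0 ≤ p i) :
    ∑ i, p i * log ((∑ j, p j) / p i) ≤ (∑ j, p j) * log (Fintype.card ι) := by
  set S := ∑ j, p j
  rcases (sum_nonneg fun i _ => hp i : 0 ≤ S).eq_or_lt with hS | hS
  · have hp0 : p = 0 := (Fintype.sum_eq_zero_iff_of_nonneg hp).1 hS.symm
    simp [S, hp0]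
  obtain ⟨i₀, -, -⟩ := exists_ne_zero_of_sum_ne_zero hS.ne'
  set M : ℝ := (Fintype.card ι : ℝ)
  have hM : 0 < M := by have : Nonempty ι := ⟨i₀⟩; exact Nat.cast_pos.2 Fintype.card_pos
  -- compare with the uniform distribution of the same mass: `p i ↦ S / M`
  have hsplit : ∀ i, p i * log (S / p i) = p i * log M + p i * log (S / M / p i) := by
    intro i
    rcases (hp i).eq_or_lt with h0 | hpos
    · simp [← h0]
    · rw [← mul_add, ← log_mul hM.ne' (by positivity)]
      field_simp
  calc ∑ i, p i * log (S / p i) = ∑ i, (p i * log M + p i * log (S / M / p i)) :=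
        sum_congr rfl fun i _ => hsplit i
    _ ≤ ∑ i, (p i * log M + (S / M - p i)) :=
        sum_le_sum fun i _ =>
          (add_le_add_iff_left _).2 (mul_log_div_le_sub (hp i) (by positivity))
    _ = S * log M := by
        simp only [sum_add_distrib, sum_sub_distrib, ← sum_mul, sum_const, card_univ,
          nsmul_eq_mul]
        field_simp
        ring

theorem sum_mul_log_sum_div_eq_zero (p : ι → ℝ) (i₀ : ι) (h : ∀ i ≠ i₀, p i = 0) :
    ∑ i, p i * log ((∑ j, p j) / p i) = 0 := by
  rw [Fintype.sum_eq_single i₀ h, Fintype.sum_eq_single i₀ fun i hi => by simp [h i hi]]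
  by_cases h0 : p i₀ = 0 <;> simp [h0]

theorem neg_sum_mul_logb_div (b : ℝ) (p q : ι → ℝ) :
    -(∑ i, p i * logb b (p i / q i)) = (∑ i, p i * log (q i / p i)) / log b := by
  rw [← sum_neg_distrib, sum_div]
  refine sum_congr rfl fun i _ => ?_
  rw [logb, ← inv_div (q i), log_inv]
  ring

theorem eq_zero_of_sum_sum_ite_ne_eq_zero [DecidableEq ι] {f : ι → ι → ℝ}
    (hf : ∀ i j, 0 ≤ f i j) (h : ∑ i, ∑ j, (if j ≠ i then f i j else 0) = 0) {i j : ι}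
    (hji : j ≠ i) : f i j = 0 := by
  rw [← Fintype.sum_prod_type',
    Fintype.sum_eq_zero_iff_of_nonneg fun _ => ite_nonneg (hf _ _) le_rfl] at h
  simpa [hji] using congrFun h (i, j)

end Entropy


theorem cond_entropy_le_general (A : Type*) [Fintype A] [DecidableEq A] (m : ℕ)
    (hcard : Fintype.card A = m)
    (μ : A × A × Bool × Bool → ℝ)
    (hnn : ∀ t, 0 ≤ μ t)
    (hunif : ∀ a b : Bool, ∑ y' : A, ∑ y : A, μ (y', y, a, b) = 1 / 4)
    (hrep : ∑ y' : A, ∑ y : A, (if y ≠ y' then μ (y', y, true, false) else 0) = 0) :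
    -(∑ t : A × A × Bool × Bool,
        μ t * Real.logb 2 (μ t / ∑ y : A, μ (t.1, y, t.2.2.1, t.2.2.2)))
      ≤ 3 / 4 * Real.logb 2 m := by
  subst hcard
  set H : Bool → Bool → ℝ := fun a b =>
    ∑ y', ∑ y, μ (y', y, a, b) * log ((∑ z, μ (y', z, a, b)) / μ (y', y, a, b))
  have hblock : ∀ a b, H a b ≤ 1 / 4 * log (Fintype.card A) := fun a b => calc
    H a b ≤ ∑ y', (∑ z, μ (y', z, a, b)) * log (Fintype.card A) :=
        sum_le_sum fun y' _ => sum_mul_log_sum_div_le _ fun y => hnn _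
    _ = 1 / 4 * log (Fintype.card A) := by rw [← sum_mul, hunif]
  have hrepeat : H true false = 0 :=
    sum_eq_zero fun y' _ => sum_mul_log_sum_div_eq_zero _ y' fun _ hy =>
      eq_zero_of_sum_sum_ite_ne_eq_zero (fun _ _ => hnn _) hrep hy
  have hsplit : ∑ t : A × A × Bool × Bool,
      μ t * log ((∑ y, μ (t.1, y, t.2.2.1, t.2.2.2)) / μ t)
        = H true true + H true false + H false true + H false false := by
    simp only [H, Fintype.sum_prod_type, Fintype.sum_bool, sum_add_distrib]
    ring
  rw [neg_sum_mul_logb_div, logb, ← mul_div_assoc,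
    div_le_div_iff_of_pos_right (log_pos one_lt_two), hsplit, hrepeat]
  linarith [hblock true true, hblock false true, hblock false false]

/-- entropy step in the converse of Theorem 6 of the paper: let `A` be
a finite set with `|A| = m ≥ 2` and `μ` a probability mass function on
`A × A × {0,1} × {0,1}` with coordinates `(y', y, w₀, w₁)` such that (i) the marginal
of `μ` on `(w₀, w₁)` is uniform, and (ii) `μ(y ≠ y', w₀ = 1, w₁ = 0) = 0`. Then the
conditional entropy
`H(Y|Y',W₀,W₁) = -Σ_t μ(t)·log₂(μ(t)/μ₁(y',w₀,w₁))` is at most `(3/4)·log₂ m`,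
where `μ₁(y',w₀,w₁) = Σ_y μ(y',y,w₀,w₁)` (convention `0·log₂(0/t) = 0`, automatic
since `Real.log 0 = 0`). -/
theorem cond_entropy_le (A : Type*) [Fintype A] [DecidableEq A] (m : ℕ) (hm : 2 ≤ m)
    (hcard : Fintype.card A = m)
    (μ : A × A × Bool × Bool → ℝ)
    (hnn : ∀ t, 0 ≤ μ t)
    (hsum : ∑ t : A × A × Bool × Bool, μ t = 1)
    (hunif : ∀ a b : Bool, ∑ y' : A, ∑ y : A, μ (y', y, a, b) = 1 / 4)
    (hrep : ∑ y' : A, ∑ y : A, (if y ≠ y' then μ (y', y, true, false) else 0) = 0) :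
    -(∑ t : A × A × Bool × Bool,
        μ t * Real.logb 2 (μ t / ∑ y : A, μ (t.1, y, t.2.2.1, t.2.2.2)))
      ≤ 3 / 4 * Real.logb 2 m :=
  cond_entropy_le_general A m hcard μ hnn hunif hrep
end
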